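/- arXiv:2504.17102 — 2 statements merged into one kernel-verified Lean document; each statement's English description precedes it below -/
import Mathlib

section
/- Let B ⊆ ℝⁿ, let f : ℝⁿ → ℝⁿ, let V : ℝⁿ → ℝ be nonnegative on B, let κ ∈ (0,1] and ρ > 0. Define F(x) := V(f(x)) − (1 − κ)·V(x). Suppose that for every x ∈ B, either (F(x) ≤ 0 and f(x) ∈ B) or V(x) ≥ ρ. Then the set X := {x ∈ B : V(x) < ρ} is forward invariant under f, and for every x₀ ∈ X and every k ≥ 0, the trajectory φ(k, x₀) remains in X and satisfies V(φ(k, x₀)) ≤ (1 − κ)ᵏ · V(x₀). -/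
/-- If for every `x ∈ B` either (`V(f(x)) − (1−κ)·V(x) ≤ 0` and `f(x) ∈ B`)
or `V(x) ≥ ρ`, and `V` is nonnegative on `B`, then `X = {x ∈ B : V(x) < ρ}` is forward
invariant and along trajectories `V(φ(k, x₀)) ≤ (1−κ)ᵏ·V(x₀)`. -/
theorem sublevel_forward_invariant_and_decay {n : ℕ}
    (B : Set (Fin n → ℝ)) (f : (Fin n → ℝ) → (Fin n → ℝ)) (V : (Fin n → ℝ) → ℝ)
    (κ ρ : ℝ) (hκ : 0 < κ) (hκ1 : κ ≤ 1) (hρ : 0 < ρ)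
    (hVnonneg : ∀ x ∈ B, 0 ≤ V x)
    (hcond : ∀ x ∈ B, (V (f x) - (1 - κ) * V x ≤ 0 ∧ f x ∈ B) ∨ ρ ≤ V x) :
    (Set.MapsTo f {x ∈ B | V x < ρ} {x ∈ B | V x < ρ}) ∧
      ∀ x₀ ∈ {x ∈ B | V x < ρ}, ∀ k : ℕ,
        f^[k] x₀ ∈ {x ∈ B | V x < ρ} ∧ V (f^[k] x₀) ≤ (1 - κ) ^ k * V x₀ := by
  have h1κ : 0 ≤ 1 - κ := by linarith
  have key : ∀ x, x ∈ B → V x < ρ →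
      (f x ∈ B ∧ V (f x) < ρ) ∧ V (f x) ≤ (1 - κ) * V x := by
    intro x hxB hxV
    rcases hcond x hxB with ⟨hF, hfB⟩ | hge
    · have hVx := hVnonneg x hxB
      have h1 : V (f x) ≤ (1 - κ) * V x := by linarith
      have h2 : (1 - κ) * V x ≤ V x := by nlinarith
      exact ⟨⟨hfB, lt_of_le_of_lt (h1.trans h2) hxV⟩, h1⟩
    · linarith
  constructor
  · intro x hx
    exact (key x hx.1 hx.2).1
  · intro x₀ hx₀ k
    induction k with
    | zero => simpa using hx₀
    | succ k ih =>
      obtain ⟨⟨hB', hV'⟩, hdec⟩ := ih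
      rw [Function.iterate_succ_apply']
      obtain ⟨hmem, hle⟩ := key _ hB' hV'
      refine ⟨hmem, ?_⟩
      calc V (f (f^[k] x₀)) ≤ (1 - κ) * V (f^[k] x₀) := hle
        _ ≤ (1 - κ) * ((1 - κ) ^ k * V x₀) := by nlinarith
        _ = (1 - κ) ^ (k + 1) * V x₀ := by ring
end

section
/- Let X ⊆ ℝⁿ be a convex set that is forward invariant under f : ℝⁿ → ℝⁿ, let 0 < μ ≤ η, and let M : X → ℝ^{n×n} be continuous, taking values in the symmetric positive definite matrices with μ·I ⪯ M(x) ⪯ η·I for all x ∈ X. Suppose the induced Riemannian distance d satisfies d(f(x), f(y)) ≤ ρ·d(x, y) for all x, y ∈ X, where ρ ∈ (0,1). Then for all x₀, x₀' ∈ X and all k ≥ 1: ‖φ(k, x₀) − φ(k, x₀')‖₂ ≤ ρ·√(η/μ)·‖φ(k−1, x₀) − φ(k−1, x₀')‖₂. -/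
open Matrix

/-- Quadratic form `vᵀ M v`. -/
def quadForm {n : ℕ} (M : Matrix (Fin n) (Fin n) ℝ) (v : EuclideanSpace ℝ (Fin n)) : ℝ :=
  v ⬝ᵥ M.mulVec v

/-- An admissible curve in `X`: a continuous, piecewise regular curve, i.e. there is a
finite partition of `[a,b]` such that on each closed subinterval the curve is
continuously differentiable with nowhere-vanishing derivative. -/
structure AdmissibleCurve {n : ℕ} (X : Set (EuclideanSpace ℝ (Fin n))) where
  a : ℝ
  b : ℝ
  hab : a ≤ b
  toFun : ℝ → (EuclideanSpace ℝ (Fin n))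
  deriv : ℝ → (EuclideanSpace ℝ (Fin n))
  mem : ∀ t ∈ Set.Icc a b, toFun t ∈ X
  cont : ContinuousOn toFun (Set.Icc a b)
  N : ℕ
  pts : Fin (N + 1) → ℝ
  pts_mono : StrictMono pts
  pts_first : pts 0 = a
  pts_last : pts (Fin.last N) = b
  piece_hasDeriv : ∀ i : Fin N, ∀ t ∈ Set.Icc (pts i.castSucc) (pts i.succ),
    HasDerivWithinAt toFun (deriv t) (Set.Icc (pts i.castSucc) (pts i.succ)) t
  piece_deriv_cont : ∀ i : Fin N,
    ContinuousOn deriv (Set.Icc (pts i.castSucc) (pts i.succ))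
  piece_deriv_ne : ∀ i : Fin N, ∀ t ∈ Set.Icc (pts i.castSucc) (pts i.succ), deriv t ≠ 0

/-- Length of an admissible curve under the metric `M`:
`L(γ) = ∫ₐᵇ √(γ'(t)ᵀ M(γ(t)) γ'(t)) dt`. -/
noncomputable def curveLength {n : ℕ} {X : Set (EuclideanSpace ℝ (Fin n))}
    (M : (EuclideanSpace ℝ (Fin n)) → Matrix (Fin n) (Fin n) ℝ) (γ : AdmissibleCurve X) : ℝ :=
  ∫ t in γ.a..γ.b, Real.sqrt (quadForm (M (γ.toFun t)) (γ.deriv t))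

/-- Riemannian distance induced by `M` on `X`:
`d(x,y) = inf { L(γ) : γ admissible in X from x to y }`. -/
noncomputable def riemDist {n : ℕ} (X : Set (EuclideanSpace ℝ (Fin n)))
    (M : (EuclideanSpace ℝ (Fin n)) → Matrix (Fin n) (Fin n) ℝ) (x y : EuclideanSpace ℝ (Fin n)) : ℝ :=
  sInf {L : ℝ | ∃ γ : AdmissibleCurve X,
    γ.toFun γ.a = x ∧ γ.toFun γ.b = y ∧ L = curveLength M γ}



lemma dot_self_eq {n : ℕ} (v : EuclideanSpace ℝ (Fin n)) : v ⬝ᵥ v = ‖v‖^2 := by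
  rw [EuclideanSpace.norm_eq, Real.sq_sqrt (Finset.sum_nonneg (fun i _ => by positivity))]
  simp [dotProduct, sq]

lemma quad_lower {n : ℕ} {μ : ℝ} {A : Matrix (Fin n) (Fin n) ℝ}
    (h : (A - μ • (1 : Matrix (Fin n) (Fin n) ℝ)).PosSemidef)
    (v : EuclideanSpace ℝ (Fin n)) : μ * ‖v‖^2 ≤ quadForm A v := by
  have := h.dotProduct_mulVec_nonneg (v : Fin n → ℝ)
  simp only [star_trivial, sub_mulVec, dotProduct_sub, smul_mulVec, one_mulVec,
    dotProduct_smul, smul_eq_mul, dot_self_eq] at this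
  unfold quadForm
  linarith

lemma quad_upper {n : ℕ} {η : ℝ} {A : Matrix (Fin n) (Fin n) ℝ}
    (h : (η • (1 : Matrix (Fin n) (Fin n) ℝ) - A).PosSemidef)
    (v : EuclideanSpace ℝ (Fin n)) : quadForm A v ≤ η * ‖v‖^2 := by
  have := h.dotProduct_mulVec_nonneg (v : Fin n → ℝ)
  simp only [star_trivial, sub_mulVec, dotProduct_sub, smul_mulVec, one_mulVec,
    dotProduct_smul, smul_eq_mul, dot_self_eq] at this
  unfold quadForm
  linarith

lemma quadForm_contOn {n : ℕ} {X : Set (EuclideanSpace ℝ (Fin n))}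
    {M : (EuclideanSpace ℝ (Fin n)) → Matrix (Fin n) (Fin n) ℝ} (hM : ContinuousOn M X)
    {s : Set ℝ} {γ d : ℝ → EuclideanSpace ℝ (Fin n)}
    (hγ : ContinuousOn γ s) (hγX : ∀ t ∈ s, γ t ∈ X) (hd : ContinuousOn d s) :
    ContinuousOn (fun t => quadForm (M (γ t)) (d t)) s := by
  have hMγ : ContinuousOn (fun t => M (γ t)) s := hM.comp hγ hγX
  unfold quadForm dotProduct Matrix.mulVec
  apply continuousOn_finset_sum
  intro i _
  apply ContinuousOn.mul
  · exact ((continuous_apply i).comp (PiLp.continuous_ofLp 2 _)).comp_continuousOn hd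
  · unfold dotProduct
    apply continuousOn_finset_sum
    intro j _
    apply ContinuousOn.mul
    · exact ((continuous_apply j).comp (continuous_apply i)).comp_continuousOn hMγ
    · exact ((continuous_apply j).comp (PiLp.continuous_ofLp 2 _)).comp_continuousOn hd

open intervalIntegral in
lemma length_lower {n : ℕ} {X : Set (EuclideanSpace ℝ (Fin n))}
    {M : (EuclideanSpace ℝ (Fin n)) → Matrix (Fin n) (Fin n) ℝ} (hM : ContinuousOn M X)
    {μ : ℝ} (hμ : 0 < μ) (hMlow : ∀ x ∈ X, (M x - μ • (1 : Matrix (Fin n) (Fin n) ℝ)).PosSemidef)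
    (γ : AdmissibleCurve X) :
    Real.sqrt μ * ‖γ.toFun γ.b - γ.toFun γ.a‖ ≤ curveLength M γ := by
  classical

  set g : ℝ → ℝ := fun t => Real.sqrt (quadForm (M (γ.toFun t)) (γ.deriv t)) with hg
  set A : ℕ → ℝ := fun j => γ.pts ⟨min j γ.N, by omega⟩ with hA
  have hAle : ∀ k, ∀ _hk : k ≤ γ.N, A k = γ.pts ⟨k, by omega⟩ := by
    intro k hk; simp [hA, min_eq_left hk]
  have hA0 : A 0 = γ.a := by
    rw [hAle 0 (Nat.zero_le _), ← γ.pts_first]; rfl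
  have hAN : A γ.N = γ.b := by
    rw [hAle γ.N le_rfl, ← γ.pts_last]; rfl
  -- per piece facts
  have piece : ∀ k, k < γ.N → Real.sqrt μ * dist (γ.toFun (A k)) (γ.toFun (A (k+1)))
      ≤ ∫ t in (A k)..(A (k+1)), g t := by
    intro k hk
    set i : Fin γ.N := ⟨k, hk⟩ with hi
    have hcast : i.castSucc = (⟨k, by omega⟩ : Fin (γ.N+1)) := rfl
    have hsucc : i.succ = (⟨k+1, by omega⟩ : Fin (γ.N+1)) := rfl
    have hAk : A k = γ.pts i.castSucc := by rw [hAle k hk.le, hcast]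
    have hAk1 : A (k+1) = γ.pts i.succ := by rw [hAle (k+1) hk, hsucc]
    set p := γ.pts i.castSucc
    set q := γ.pts i.succ
    have hpq : p ≤ q := (γ.pts_mono i.castSucc_lt_succ).le
    have hsub : Set.Icc p q ⊆ Set.Icc γ.a γ.b := by
      intro t ht
      constructor
      · exact le_trans (by rw [← γ.pts_first]; exact γ.pts_mono.monotone (Fin.zero_le _)) ht.1
      · exact le_trans ht.2 (by rw [← γ.pts_last]; exact γ.pts_mono.monotone (Fin.le_last _))
    have hmemX : ∀ t ∈ Set.Icc p q, γ.toFun t ∈ X := fun t ht => γ.mem t (hsub ht)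
    have hγc : ContinuousOn γ.toFun (Set.Icc p q) := γ.cont.mono hsub
    have hdc : ContinuousOn γ.deriv (Set.Icc p q) := γ.piece_deriv_cont i
    have hgc : ContinuousOn g (Set.Icc p q) :=
      Real.continuous_sqrt.comp_continuousOn (quadForm_contOn hM hγc hmemX hdc)
    have hgint : IntervalIntegrable g MeasureTheory.volume p q :=
      hgc.intervalIntegrable_of_Icc hpq
    have hndint : IntervalIntegrable (fun t => ‖γ.deriv t‖) MeasureTheory.volume p q :=
      hdc.norm.intervalIntegrable_of_Icc hpq
    have hdint : IntervalIntegrable γ.deriv MeasureTheory.volume p q :=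
      hdc.intervalIntegrable_of_Icc hpq
    -- FTC
    have hftc : ∫ t in p..q, γ.deriv t = γ.toFun q - γ.toFun p := by
      apply integral_eq_sub_of_hasDeriv_right_of_le hpq hγc _ hdint
      intro t ht
      have h1 : HasDerivWithinAt γ.toFun (γ.deriv t) (Set.Icc p q) t :=
        γ.piece_hasDeriv i t (Set.Ioo_subset_Icc_self ht)
      have h2 : HasDerivAt γ.toFun (γ.deriv t) t :=
        h1.hasDerivAt (Icc_mem_nhds ht.1 ht.2)
      exact h2.hasDerivWithinAt
    have hnorm : ‖γ.toFun q - γ.toFun p‖ ≤ ∫ t in p..q, ‖γ.deriv t‖ := by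
      rw [← hftc]; exact norm_integral_le_integral_norm hpq
    have hmono : Real.sqrt μ * ∫ t in p..q, ‖γ.deriv t‖ ≤ ∫ t in p..q, g t := by
      rw [← integral_const_mul]
      apply integral_mono_on hpq (hndint.const_mul _) hgint
      intro t ht
      have hx := quad_lower (hMlow _ (hmemX t ht)) (γ.deriv t)
      have : Real.sqrt μ * ‖γ.deriv t‖ = Real.sqrt (μ * ‖γ.deriv t‖^2) := by
        rw [Real.sqrt_mul hμ.le, Real.sqrt_sq (norm_nonneg _)]
      rw [this]
      exact Real.sqrt_le_sqrt hx
    rw [hAk, hAk1, dist_comm, dist_eq_norm]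
    calc Real.sqrt μ * ‖γ.toFun q - γ.toFun p‖
        ≤ Real.sqrt μ * ∫ t in p..q, ‖γ.deriv t‖ :=
          mul_le_mul_of_nonneg_left hnorm (Real.sqrt_nonneg _)
      _ ≤ _ := hmono
  -- integrability per piece for summing
  have hgint' : ∀ k < γ.N, IntervalIntegrable g MeasureTheory.volume (A k) (A (k+1)) := by
    intro k hk
    set i : Fin γ.N := ⟨k, hk⟩ with hi
    have hAk : A k = γ.pts i.castSucc := by rw [hAle k hk.le]; rfl
    have hAk1 : A (k+1) = γ.pts i.succ := by rw [hAle (k+1) hk]; rfl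
    rw [hAk, hAk1]
    have hpq : γ.pts i.castSucc ≤ γ.pts i.succ := (γ.pts_mono i.castSucc_lt_succ).le
    have hsub : Set.Icc (γ.pts i.castSucc) (γ.pts i.succ) ⊆ Set.Icc γ.a γ.b := by
      intro t ht
      exact ⟨le_trans (by rw [← γ.pts_first]; exact γ.pts_mono.monotone (Fin.zero_le _)) ht.1,
        le_trans ht.2 (by rw [← γ.pts_last]; exact γ.pts_mono.monotone (Fin.le_last _))⟩
    exact (Real.continuous_sqrt.comp_continuousOn (quadForm_contOn hM (γ.cont.mono hsub)
      (fun t ht => γ.mem t (hsub ht)) (γ.piece_deriv_cont i))).intervalIntegrable_of_Icc hpq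
  have hsum : ∑ k ∈ Finset.range γ.N, ∫ t in (A k)..(A (k+1)), g t = ∫ t in (A 0)..(A γ.N), g t :=
    intervalIntegral.sum_integral_adjacent_intervals hgint'
  have htri : dist (γ.toFun (A 0)) (γ.toFun (A γ.N)) ≤
      ∑ k ∈ Finset.range γ.N, dist (γ.toFun (A k)) (γ.toFun (A (k+1))) :=
    dist_le_range_sum_dist (fun k => γ.toFun (A k)) γ.N
  have key : Real.sqrt μ * dist (γ.toFun (A 0)) (γ.toFun (A γ.N)) ≤ ∫ t in (A 0)..(A γ.N), g t := by
    calc Real.sqrt μ * dist (γ.toFun (A 0)) (γ.toFun (A γ.N))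
        ≤ Real.sqrt μ * ∑ k ∈ Finset.range γ.N, dist (γ.toFun (A k)) (γ.toFun (A (k+1))) :=
          mul_le_mul_of_nonneg_left htri (Real.sqrt_nonneg _)
      _ = ∑ k ∈ Finset.range γ.N, Real.sqrt μ * dist (γ.toFun (A k)) (γ.toFun (A (k+1))) := by
          rw [Finset.mul_sum]
      _ ≤ ∑ k ∈ Finset.range γ.N, ∫ t in (A k)..(A (k+1)), g t :=
          Finset.sum_le_sum (fun k hk => piece k (Finset.mem_range.mp hk))
      _ = _ := hsum
  rw [hA0, hAN] at key
  unfold curveLength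
  rw [dist_comm, dist_eq_norm] at key
  exact key

noncomputable def segCurve {n : ℕ} {X : Set (EuclideanSpace ℝ (Fin n))} (hXconv : Convex ℝ X)
    {x y : EuclideanSpace ℝ (Fin n)} (hx : x ∈ X) (hy : y ∈ X) (hxy : x ≠ y) :
    AdmissibleCurve X where
  a := 0
  b := 1
  hab := zero_le_one
  toFun := fun t => x + t • (y - x)
  deriv := fun _ => y - x
  mem := by
    intro t ht
    have := hXconv hx hy (by linarith [ht.1, ht.2] : (0:ℝ) ≤ 1 - t) ht.1 (by ring)
    convert this using 1
    module
  cont := (continuous_const.add (continuous_id.smul continuous_const)).continuousOn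
  N := 1
  pts := ![0, 1]
  pts_mono := by
    intro i j h
    fin_cases i <;> fin_cases j <;> simp_all
  pts_first := rfl
  pts_last := rfl
  piece_hasDeriv := by
    intro i t _
    have h := ((hasDerivAt_id t).smul_const (y - x)).const_add x
    rw [one_smul] at h
    exact h.hasDerivWithinAt
  piece_deriv_cont := fun _ => continuousOn_const
  piece_deriv_ne := fun _ t _ => sub_ne_zero.mpr (Ne.symm hxy)

lemma riemDist_bddBelow {n : ℕ} (X : Set (EuclideanSpace ℝ (Fin n)))
    (M : (EuclideanSpace ℝ (Fin n)) → Matrix (Fin n) (Fin n) ℝ)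
    (x y : EuclideanSpace ℝ (Fin n)) :
    BddBelow {L : ℝ | ∃ γ : AdmissibleCurve X,
      γ.toFun γ.a = x ∧ γ.toFun γ.b = y ∧ L = curveLength M γ} := by
  refine ⟨0, ?_⟩
  rintro L ⟨γ, -, -, rfl⟩
  exact intervalIntegral.integral_nonneg γ.hab (fun t _ => Real.sqrt_nonneg _)

lemma riemDist_le {n : ℕ} {X : Set (EuclideanSpace ℝ (Fin n))} (hXconv : Convex ℝ X)
    {M : (EuclideanSpace ℝ (Fin n)) → Matrix (Fin n) (Fin n) ℝ}
    {η : ℝ} (hη : 0 ≤ η)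
    (hM : ContinuousOn M X)
    (hMup : ∀ x ∈ X, (η • (1 : Matrix (Fin n) (Fin n) ℝ) - M x).PosSemidef)
    {x y : EuclideanSpace ℝ (Fin n)} (hx : x ∈ X) (hy : y ∈ X) (hxy : x ≠ y) :
    riemDist X M x y ≤ Real.sqrt η * ‖x - y‖ := by
  set γ := segCurve hXconv hx hy hxy with hγ
  have hmemseg : ∀ t ∈ Set.Icc (0:ℝ) 1, γ.toFun t ∈ X := γ.mem
  have hends : γ.toFun γ.a = x ∧ γ.toFun γ.b = y := by
    constructor
    · show x + (0:ℝ) • (y - x) = x; simp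
    · show x + (1:ℝ) • (y - x) = y; simp
  have hlen : curveLength M γ ≤ Real.sqrt η * ‖x - y‖ := by
    unfold curveLength
    have hcont : ContinuousOn (fun t => Real.sqrt (quadForm (M (γ.toFun t)) (γ.deriv t)))
        (Set.Icc (0:ℝ) 1) := by
      apply Real.continuous_sqrt.comp_continuousOn
      exact quadForm_contOn hM (γ.cont) hmemseg continuousOn_const
    have h1 : ∫ t in γ.a..γ.b, Real.sqrt (quadForm (M (γ.toFun t)) (γ.deriv t))
        ≤ ∫ _t in γ.a..γ.b, Real.sqrt η * ‖x - y‖ := by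
      apply intervalIntegral.integral_mono_on γ.hab (hcont.intervalIntegrable_of_Icc γ.hab)
        intervalIntegrable_const
      intro t ht
      have hq := quad_upper (hMup _ (hmemseg t ht)) (γ.deriv t)
      have hd : γ.deriv t = y - x := rfl
      calc Real.sqrt (quadForm (M (γ.toFun t)) (γ.deriv t))
          ≤ Real.sqrt (η * ‖γ.deriv t‖^2) := Real.sqrt_le_sqrt hq
        _ = Real.sqrt η * ‖x - y‖ := by
            rw [Real.sqrt_mul hη, Real.sqrt_sq (norm_nonneg _), hd, norm_sub_rev]
    have h2 : ∫ _t in γ.a..γ.b, Real.sqrt η * ‖x - y‖ = Real.sqrt η * ‖x - y‖ := by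
      show ∫ _t in (0:ℝ)..1, Real.sqrt η * ‖x - y‖ = _
      simp
    linarith
  calc riemDist X M x y ≤ curveLength M γ := by
        apply csInf_le (riemDist_bddBelow X M x y)
        exact ⟨γ, hends.1, hends.2, rfl⟩
    _ ≤ _ := hlen

lemma riemDist_ge {n : ℕ} {X : Set (EuclideanSpace ℝ (Fin n))} (hXconv : Convex ℝ X)
    {M : (EuclideanSpace ℝ (Fin n)) → Matrix (Fin n) (Fin n) ℝ}
    {μ : ℝ} (hμ : 0 < μ)
    (hM : ContinuousOn M X)
    (hMlow : ∀ x ∈ X, (M x - μ • (1 : Matrix (Fin n) (Fin n) ℝ)).PosSemidef)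
    {x y : EuclideanSpace ℝ (Fin n)} (hx : x ∈ X) (hy : y ∈ X) (hxy : x ≠ y) :
    Real.sqrt μ * ‖x - y‖ ≤ riemDist X M x y := by
  apply le_csInf
  · refine ⟨curveLength M (segCurve hXconv hx hy hxy), segCurve hXconv hx hy hxy, ?_, ?_, rfl⟩
    · show x + (0:ℝ) • (y - x) = x; simp
    · show x + (1:ℝ) • (y - x) = y; simp
  · rintro L ⟨γ, ha, hb, rfl⟩
    have := length_lower hM hμ hMlow γ
    rw [ha, hb, norm_sub_rev] at this
    exact this

/-- on a convex forward invariant set `X` with `μ·I ⪯ M(x) ⪯ η·I`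
(`0 < μ ≤ η`, `M` continuous and symmetric positive definite valued), if the induced
Riemannian distance `d` satisfies `d(f(x), f(y)) ≤ ρ·d(x,y)` on `X` with `ρ ∈ (0,1)`,
then for all `x₀, x₀' ∈ X` and all `k ≥ 1`,
`‖φ(k,x₀) − φ(k,x₀')‖₂ ≤ ρ·√(η/μ)·‖φ(k−1,x₀) − φ(k−1,x₀')‖₂`. -/
theorem euclidean_stepwise_contraction {n : ℕ}
    (X : Set (EuclideanSpace ℝ (Fin n))) (hXconv : Convex ℝ X)
    (f : (EuclideanSpace ℝ (Fin n)) → (EuclideanSpace ℝ (Fin n)))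
    (hinv : Set.MapsTo f X X)
    (μ η : ℝ) (hμ : 0 < μ) (hμη : μ ≤ η)
    (M : (EuclideanSpace ℝ (Fin n)) → Matrix (Fin n) (Fin n) ℝ)
    (hMcont : ContinuousOn M X)
    (hMpd : ∀ x ∈ X, (M x).PosDef)
    (hMlow : ∀ x ∈ X, (M x - μ • (1 : Matrix (Fin n) (Fin n) ℝ)).PosSemidef)
    (hMup : ∀ x ∈ X, (η • (1 : Matrix (Fin n) (Fin n) ℝ) - M x).PosSemidef)
    (ρ : ℝ) (hρ0 : 0 < ρ) (hρ1 : ρ < 1)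
    (hcontr : ∀ x ∈ X, ∀ y ∈ X, riemDist X M (f x) (f y) ≤ ρ * riemDist X M x y) :
    ∀ x₀ ∈ X, ∀ x₀' ∈ X, ∀ k : ℕ, 1 ≤ k →
      ‖f^[k] x₀ - f^[k] x₀'‖ ≤
        ρ * Real.sqrt (η / μ) * ‖f^[k - 1] x₀ - f^[k - 1] x₀'‖ := by
  intro x₀ hx₀ x₀' hx₀' k hk
  obtain ⟨j, rfl⟩ : ∃ j, k = j + 1 := ⟨k - 1, by omega⟩
  simp only [Nat.add_sub_cancel, Function.iterate_succ_apply']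
  set u := f^[j] x₀ with hu'
  set v := f^[j] x₀' with hv'
  have hu : u ∈ X := hinv.iterate j hx₀
  have hv : v ∈ X := hinv.iterate j hx₀'
  have hsq : Real.sqrt (η / μ) = Real.sqrt η / Real.sqrt μ :=
    Real.sqrt_div (hμ.le.trans hμη) μ
  by_cases hfe : f u = f v
  · rw [hfe, sub_self, norm_zero]
    positivity
  · have huv : u ≠ v := fun h => hfe (by rw [h])
    have h1 := riemDist_ge hXconv hμ hMcont hMlow (hinv hu) (hinv hv) hfe
    have h2 := hcontr u hu v hv
    have h3 := riemDist_le hXconv (hμ.le.trans hμη) hMcont hMup hu hv huv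
    have hμs : 0 < Real.sqrt μ := Real.sqrt_pos.mpr hμ
    have hchain : Real.sqrt μ * ‖f u - f v‖ ≤ ρ * (Real.sqrt η * ‖u - v‖) :=
      h1.trans (h2.trans (mul_le_mul_of_nonneg_left h3 hρ0.le))
    rw [hsq, show ρ * (Real.sqrt η / Real.sqrt μ) * ‖u - v‖
        = (ρ * (Real.sqrt η * ‖u - v‖)) / Real.sqrt μ from by ring, le_div_iff₀ hμs]
    linear_combination hchain
end
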